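/- arXiv:math/0605015 — 2 statements merged into one kernel-verified Lean document; each statement's English description precedes it below -/
import Mathlib

section
/- Yang–Baxter equation for the rational R-matrix: for all u, v ∈ ℂ, R^{(12)}(u−v) R^{(13)}(u) R^{(23)}(v) = R^{(23)}(v) R^{(13)}(u) R^{(12)}(u−v) in End(V ⊗ V ⊗ V). -/
noncomputable section

namespace BetheStatements

/-- The matrix unit `E_{ab}` acting on `V = ℂ^N`. -/
def matE (N : ℕ) (a b : Fin N) : Matrix (Fin N) (Fin N) ℂ := Matrix.single a b 1

/-- The flip map `P ∈ End(V ⊗ V)`, `P (x ⊗ y) = y ⊗ x`. -/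
def Pmat (N : ℕ) : Matrix (Fin N × Fin N) (Fin N × Fin N) ℂ :=
  Matrix.of fun x y => if x.1 = y.2 ∧ x.2 = y.1 then (1 : ℂ) else 0

/-- The rational R-matrix `R(u) = u · id + P ∈ End(V ⊗ V)`. -/
def Rmat (N : ℕ) (u : ℂ) : Matrix (Fin N × Fin N) (Fin N × Fin N) ℂ :=
  u • (1 : Matrix (Fin N × Fin N) (Fin N × Fin N) ℂ) + Pmat N

/-- The skew-symmetrization projector `A^{(k)} ∈ End(V^{⊗k})`. -/
def Ask (k N : ℕ) : Matrix (Fin k → Fin N) (Fin k → Fin N) ℂ :=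
  Matrix.of fun x y => (Nat.factorial k : ℂ)⁻¹ *
    ∑ σ : Equiv.Perm (Fin k), ((Equiv.Perm.sign σ : ℤ) : ℂ) * (if x = y ∘ σ then 1 else 0)

/-- `X^{(p)}`: embedding of an operator on `V` into `End(V^{⊗k})` (acting on tensor factor `p`). -/
def emb1 {A : Type*} [Ring A] {N k : ℕ} (p : Fin k) (X : Matrix (Fin N) (Fin N) A) :
    Matrix (Fin k → Fin N) (Fin k → Fin N) A :=
  Matrix.of fun x y => if ∀ j, j ≠ p → x j = y j then X (x p) (y p) else 0

/-- `X^{(pq)}`: embedding of an operator on `V ⊗ V` into `End(V^{⊗k})`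
(acting on the tensor factors `p` and `q`). -/
def emb2 {A : Type*} [Ring A] {N k : ℕ} (p q : Fin k) (X : Matrix (Fin N × Fin N) (Fin N × Fin N) A) :
    Matrix (Fin k → Fin N) (Fin k → Fin N) A :=
  Matrix.of fun x y => if ∀ j, j ≠ p → j ≠ q → x j = y j then X (x p, x q) (y p, y q) else 0


/-- Permutation matrix on `V^{⊗k}`. -/
def permM (N k : ℕ) (σ : Equiv.Perm (Fin k)) : Matrix (Fin k → Fin N) (Fin k → Fin N) ℂ :=
  Matrix.of fun x y => if x = y ∘ σ then 1 else 0

lemma permM_mul (N k : ℕ) (σ τ : Equiv.Perm (Fin k)) :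
    permM N k σ * permM N k τ = permM N k (σ.trans τ) := by
  ext x y
  simp only [Matrix.mul_apply, permM, Matrix.of_apply]
  rw [Finset.sum_eq_single (y ∘ τ)]
  · simp only [if_true, mul_one, Equiv.coe_trans, Function.comp_assoc]
    congr
  · intro z _ hz
    simp [if_neg hz]
  · simp

lemma emb2_P {N k : ℕ} (p q : Fin k) (hpq : p ≠ q) :
    emb2 p q (Pmat N) = permM N k (Equiv.swap p q) := by
  ext x y
  simp only [emb2, Pmat, permM, Matrix.of_apply]
  by_cases h : x = y ∘ Equiv.swap p q
  · rw [if_pos h]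
    subst h
    rw [if_pos, if_pos]
    · simp [Equiv.swap_apply_left, Equiv.swap_apply_right]
    · intro j hjp hjq
      simp [Equiv.swap_apply_of_ne_of_ne hjp hjq]
  · rw [if_neg h]
    by_cases h2 : ∀ j, j ≠ p → j ≠ q → x j = y j
    · rw [if_pos h2, if_neg]
      intro hc
      apply h
      funext j
      by_cases hjp : j = p
      · subst hjp; simpa [Equiv.swap_apply_left] using hc.1
      by_cases hjq : j = q
      · subst hjq; simpa [Equiv.swap_apply_right] using hc.2
      · rw [Function.comp_apply, Equiv.swap_apply_of_ne_of_ne hjp hjq]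
        exact h2 j hjp hjq
    · rw [if_neg h2]

lemma emb2_one {N k : ℕ} (p q : Fin k) (hpq : p ≠ q) :
    emb2 p q (1 : Matrix (Fin N × Fin N) (Fin N × Fin N) ℂ) = 1 := by
  ext x y
  simp only [emb2, Matrix.of_apply, Matrix.one_apply]
  by_cases h : x = y
  · subst h; rw [if_pos (fun _ _ _ => rfl), if_pos rfl, if_pos rfl]
  · rw [if_neg h]
    by_cases h2 : ∀ j, j ≠ p → j ≠ q → x j = y j
    · rw [if_pos h2, if_neg]
      intro hc
      apply h
      funext j
      by_cases hjp : j = p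
      · subst hjp; exact congrArg Prod.fst hc
      by_cases hjq : j = q
      · subst hjq; exact congrArg Prod.snd hc
      · exact h2 j hjp hjq
    · rw [if_neg h2]

lemma emb2_add {N k : ℕ} (p q : Fin k)
    (X Y : Matrix (Fin N × Fin N) (Fin N × Fin N) ℂ) :
    emb2 p q (X + Y) = emb2 p q X + emb2 p q Y := by
  ext x y
  simp only [emb2, Matrix.of_apply, Matrix.add_apply]
  split_ifs <;> simp

lemma emb2_smul {N k : ℕ} (p q : Fin k) (c : ℂ)
    (X : Matrix (Fin N × Fin N) (Fin N × Fin N) ℂ) :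
    emb2 p q (c • X) = c • emb2 p q X := by
  ext x y
  simp only [emb2, Matrix.of_apply, Matrix.smul_apply]
  split_ifs <;> simp

lemma emb2_R {N k : ℕ} (p q : Fin k) (hpq : p ≠ q) (w : ℂ) :
    emb2 p q (Rmat N w) = w • 1 + permM N k (Equiv.swap p q) := by
  rw [Rmat, emb2_add, emb2_smul, emb2_one p q hpq, emb2_P p q hpq]

/-- The Yang–Baxter equation for the rational R-matrix, in `End(V ⊗ V ⊗ V)`:
`R^{(12)}(u−v) R^{(13)}(u) R^{(23)}(v) = R^{(23)}(v) R^{(13)}(u) R^{(12)}(u−v)`. -/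
theorem statement1 (N : ℕ) (hN : 1 ≤ N) (u v : ℂ) :
    emb2 (0 : Fin 3) 1 (Rmat N (u - v)) * emb2 (0 : Fin 3) 2 (Rmat N u) *
        emb2 (1 : Fin 3) 2 (Rmat N v)
      = emb2 (1 : Fin 3) 2 (Rmat N v) * emb2 (0 : Fin 3) 2 (Rmat N u) *
        emb2 (0 : Fin 3) 1 (Rmat N (u - v)) := by
  have h01 : (0 : Fin 3) ≠ 1 := by decide
  have h02 : (0 : Fin 3) ≠ 2 := by decide
  have h12 : (1 : Fin 3) ≠ 2 := by decide
  rw [emb2_R _ _ h01, emb2_R _ _ h02, emb2_R _ _ h12]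
  set A := permM N 3 (Equiv.swap 0 1) with hA
  set B := permM N 3 (Equiv.swap 0 2) with hB
  set C := permM N 3 (Equiv.swap 1 2) with hC
  simp only [add_mul, mul_add, smul_mul_assoc, mul_smul_comm, one_mul, mul_one,
    smul_smul, hA, hB, hC, permM_mul]
  have f1 : ((Equiv.swap (0:Fin 3) 1).trans (Equiv.swap 0 2)).trans (Equiv.swap 1 2)
      = Equiv.swap (0:Fin 3) 2 := by decide
  have f2 : ((Equiv.swap (1:Fin 3) 2).trans (Equiv.swap 0 2)).trans (Equiv.swap 0 1)
      = Equiv.swap (0:Fin 3) 2 := by decide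
  have e2 : (Equiv.swap (0:Fin 3) 2).trans (Equiv.swap 1 2)
      = (Equiv.swap (0:Fin 3) 1).trans (Equiv.swap 0 2) := by decide
  have e3 : (Equiv.swap (0:Fin 3) 1).trans (Equiv.swap 1 2)
      = (Equiv.swap (0:Fin 3) 2).trans (Equiv.swap 0 1) := by decide
  have e4 : (Equiv.swap (1:Fin 3) 2).trans (Equiv.swap 0 2)
      = (Equiv.swap (0:Fin 3) 2).trans (Equiv.swap 0 1) := by decide
  have e5 : (Equiv.swap (1:Fin 3) 2).trans (Equiv.swap 0 1)
      = (Equiv.swap (0:Fin 3) 1).trans (Equiv.swap 0 2) := by decide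
  rw [f1, f2, e2, e3, e4, e5]
  module

end BetheStatements
end
end

section
/- (Corollary 3.3) For every k with 1 ≤ k ≤ N and every u ∈ ℂ: R_{∧k,∧1}(u) ∘ (σ ∘ R_{∧1,∧k}(−u) ∘ σ^{−1}) = (u + 1)(k − u) · id in End(V^{∧k} ⊗ V), where σ : V ⊗ V^{∧k} → V^{∧k} ⊗ V is the flip of the two tensor factors. -/
noncomputable section

namespace BetheStatements

/-- The two-site operator `E_{ab} ⊗ E_{cd} ∈ End(V ⊗ V)`. -/
def EE (N : ℕ) (a b c d : Fin N) : Matrix (Fin N × Fin N) (Fin N × Fin N) ℂ :=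
  Matrix.of fun x y => matE N a b x.1 y.1 * matE N c d x.2 y.2

/-- The fusion product `∏^{←}_{1≤i≤k} R^{(i,k+1)}(u+i−k)` on `V^{⊗k} ⊗ V` whose restriction to
`V^{∧k} ⊗ V` is the fused R-matrix `R^{∧k,∧1}(u)`. -/
def bigRk1 (N k : ℕ) (u : ℂ) : Matrix (Fin (k+1) → Fin N) (Fin (k+1) → Fin N) ℂ :=
  ((List.finRange k).reverse.map fun r =>
    emb2 (Fin.castSucc r) (Fin.last k) (Rmat N (u + (((r : ℕ) : ℂ) + 1) - (k : ℂ)))).prod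

/-- The fusion product `∏^{→}_{1≤j≤k} R^{(1,j+1)}(u−j+k)` on `V ⊗ V^{⊗k}` whose restriction to
`V ⊗ V^{∧k}` is the fused R-matrix `R^{∧1,∧k}(u)`. -/
def bigR1k (N k : ℕ) (u : ℂ) : Matrix (Fin (k+1) → Fin N) (Fin (k+1) → Fin N) ℂ :=
  ((List.finRange k).map fun (r : Fin k) =>
    emb2 (0 : Fin (k+1)) r.succ (Rmat N (u - (((r : ℕ) : ℂ) + 1) + (k : ℂ)))).prod

/-- `R_{∧k,∧1}(u) = u + Σ_{a,b} (E_{ab}^{(1)} + ⋯ + E_{ab}^{(k)}) ⊗ E_{ba}`, written as an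
operator on the ambient space `V^{⊗k} ⊗ V` (it commutes with `A^{(k)} ⊗ id` and hence
preserves `V^{∧k} ⊗ V`). -/
def smallRk1 (N k : ℕ) (u : ℂ) : Matrix (Fin (k+1) → Fin N) (Fin (k+1) → Fin N) ℂ :=
  u • 1 + ∑ a : Fin N, ∑ b : Fin N, ∑ r : Fin k,
    emb2 (Fin.castSucc r) (Fin.last k) (EE N a b b a)

/-- `R_{∧1,∧k}(u) = u + k − 1 + Σ_{a,b} E_{ab} ⊗ (E_{ba}^{(1)} + ⋯ + E_{ba}^{(k)})`, written as
an operator on the ambient space `V ⊗ V^{⊗k}`. -/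
def smallR1k (N k : ℕ) (u : ℂ) : Matrix (Fin (k+1) → Fin N) (Fin (k+1) → Fin N) ℂ :=
  (u + (k : ℂ) - 1) • 1 + ∑ a : Fin N, ∑ b : Fin N, ∑ r : Fin k,
    emb2 (0 : Fin (k+1)) r.succ (EE N a b b a)

/-- The projector `A^{(k)} ⊗ id_V` on `V^{⊗k} ⊗ V` (onto `V^{∧k} ⊗ V`). -/
def AskFirst (N k : ℕ) : Matrix (Fin (k+1) → Fin N) (Fin (k+1) → Fin N) ℂ :=
  Matrix.of fun x y =>
    Ask k N (fun r => x (Fin.castSucc r)) (fun r => y (Fin.castSucc r)) *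
      (if x (Fin.last k) = y (Fin.last k) then 1 else 0)

/-- The projector `id_V ⊗ A^{(k)}` on `V ⊗ V^{⊗k}` (onto `V ⊗ V^{∧k}`). -/
def AskLast (N k : ℕ) : Matrix (Fin (k+1) → Fin N) (Fin (k+1) → Fin N) ℂ :=
  Matrix.of fun x y =>
    Ask k N (fun r => x r.succ) (fun r => y r.succ) * (if x 0 = y 0 then 1 else 0)

/-- The matrix of the flip `σ : V ⊗ V^{⊗k} → V^{⊗k} ⊗ V` of the two tensor factors,
`e_{y(0)} ⊗ e_{y(1)} ⊗ ⋯ ⊗ e_{y(k)} ↦ e_{y(1)} ⊗ ⋯ ⊗ e_{y(k)} ⊗ e_{y(0)}`. -/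
def flipMat (N k : ℕ) : Matrix (Fin (k+1) → Fin N) (Fin (k+1) → Fin N) ℂ :=
  Matrix.of fun x y => if x = y ∘ finRotate (k+1) then 1 else 0

/-- The matrix of the inverse flip `σ⁻¹ : V^{⊗k} ⊗ V → V ⊗ V^{⊗k}`. -/
def flipMatInv (N k : ℕ) : Matrix (Fin (k+1) → Fin N) (Fin (k+1) → Fin N) ℂ :=
  Matrix.of fun x y => if x = y ∘ (finRotate (k+1)).symm then 1 else 0

/-! ### Auxiliary machinery for statement 4 -/

/-- Matrix of a permutation of tensor factors. -/
def permMat (N : ℕ) {m : ℕ} (τ : Equiv.Perm (Fin m)) :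
    Matrix (Fin m → Fin N) (Fin m → Fin N) ℂ :=
  Matrix.of fun x y => if x = y ∘ τ then 1 else 0

lemma permMat_mul (N : ℕ) {m : ℕ} (τ ρ : Equiv.Perm (Fin m)) :
    permMat N τ * permMat N ρ = permMat N (τ.trans ρ) := by
  ext x y
  simp only [Matrix.mul_apply, permMat, Matrix.of_apply]
  rw [Finset.sum_eq_single (y ∘ ρ)]
  · have hc : (x = (y ∘ ⇑ρ) ∘ ⇑τ) ↔ (x = y ∘ ⇑(τ.trans ρ)) := by
      rw [Equiv.coe_trans, Function.comp_assoc]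
    by_cases h : x = (y ∘ ⇑ρ) ∘ ⇑τ
    · rw [if_pos h, if_pos (hc.mp h), if_pos rfl, mul_one]
    · rw [if_neg h, if_neg (fun hh => h (hc.mpr hh)), if_pos rfl, mul_one]
  · intro b _ hb
    rw [if_neg hb, mul_zero]
  · intro h; exact absurd (Finset.mem_univ _) h

lemma permMat_refl (N m : ℕ) : permMat N (Equiv.refl (Fin m)) = 1 := by
  ext x y
  simp [permMat, Matrix.one_apply, eq_comm]

lemma permMat_mul_apply (N : ℕ) {m : ℕ} (τ : Equiv.Perm (Fin m))
    (M : Matrix (Fin m → Fin N) (Fin m → Fin N) ℂ) (x y : Fin m → Fin N) :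
    (permMat N τ * M) x y = M (x ∘ ⇑τ.symm) y := by
  simp only [Matrix.mul_apply, permMat, Matrix.of_apply]
  rw [Finset.sum_eq_single (x ∘ ⇑τ.symm)]
  · rw [if_pos (by funext j; simp), one_mul]
  · intro b _ hb
    rw [if_neg, zero_mul]
    intro h
    exact hb (by rw [h]; funext j; simp)
  · intro h; exact absurd (Finset.mem_univ _) h

lemma Ask_comp_swap {k N : ℕ} (r s : Fin k) (hrs : r ≠ s) (v w : Fin k → Fin N) :
    Ask k N (v ∘ Equiv.swap r s) w = - Ask k N v w := by
  simp only [Ask, Matrix.of_apply]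
  rw [← mul_neg, ← Finset.sum_neg_distrib]
  congr 1
  refine Fintype.sum_equiv (Equiv.mulRight (Equiv.swap r s)) _ _ (fun σ => ?_)
  have key : (v = w ∘ ⇑(σ * Equiv.swap r s)) ↔ (v ∘ ⇑(Equiv.swap r s) = w ∘ ⇑σ) := by
    constructor
    · intro h
      funext j
      have := congrFun h (Equiv.swap r s j)
      simpa [Equiv.Perm.coe_mul] using this
    · intro h
      funext j
      have := congrFun h (Equiv.swap r s j)
      simpa [Equiv.Perm.coe_mul] using this
  have hsign : Equiv.Perm.sign (σ * Equiv.swap r s) = - Equiv.Perm.sign σ := by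
    rw [Equiv.Perm.sign_mul, Equiv.Perm.sign_swap hrs, mul_neg_one]
  show (((Equiv.Perm.sign σ : ℤ) : ℂ) * if v ∘ ⇑(Equiv.swap r s) = w ∘ ⇑σ then 1 else 0)
      = -(((Equiv.Perm.sign (σ * Equiv.swap r s) : ℤ) : ℂ) *
          if v = w ∘ ⇑(σ * Equiv.swap r s) then 1 else 0)
  rw [hsign, if_congr key rfl rfl]
  push_cast
  ring

lemma sum_EE (N : ℕ) : (∑ a : Fin N, ∑ b : Fin N, EE N a b b a) = Pmat N := by
  ext x y
  simp only [Matrix.sum_apply, EE, matE, Pmat, Matrix.of_apply, Matrix.single]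
  rw [Finset.sum_eq_single y.2]
  · rw [Finset.sum_eq_single x.2]
    · by_cases h1 : x.1 = y.2 <;> by_cases h2 : x.2 = y.1 <;>
        simp [h1, h2, eq_comm, and_comm]
    · intro b _ hb
      simp [hb]
    · intro h; exact absurd (Finset.mem_univ _) h
  · intro a _ ha
    apply Finset.sum_eq_zero
    intro b _
    simp [ha]
  · intro h; exact absurd (Finset.mem_univ _) h

lemma emb2_sum {N k : ℕ} (p q : Fin k) {ι : Type*} (s : Finset ι)
    (f : ι → Matrix (Fin N × Fin N) (Fin N × Fin N) ℂ) :
    emb2 p q (∑ i ∈ s, f i) = ∑ i ∈ s, emb2 p q (f i) := by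
  ext x y
  simp only [Matrix.sum_apply, emb2, Matrix.of_apply]
  split_ifs with h <;> simp

lemma emb2_Pmat {N k : ℕ} (p q : Fin k) (h : p ≠ q) :
    emb2 p q (Pmat N) = permMat N (Equiv.swap p q) := by
  ext x y
  simp only [emb2, Pmat, permMat, Matrix.of_apply]
  have key : (x = y ∘ ⇑(Equiv.swap p q)) ↔
      ((∀ j, j ≠ p → j ≠ q → x j = y j) ∧ (x p = y q ∧ x q = y p)) := by
    constructor
    · intro hxy
      refine ⟨fun j hjp hjq => ?_, ?_, ?_⟩
      · rw [hxy]; simp [Equiv.swap_apply_of_ne_of_ne hjp hjq]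
      · rw [hxy]; simp
      · rw [hxy]; simp
    · rintro ⟨h1, h2, h3⟩
      funext j
      rcases eq_or_ne j p with rfl | hjp
      · simpa using h2
      rcases eq_or_ne j q with rfl | hjq
      · simpa using h3
      · simp [Equiv.swap_apply_of_ne_of_ne hjp hjq, h1 j hjp hjq]
  by_cases h1 : ∀ j, j ≠ p → j ≠ q → x j = y j
  · by_cases h2 : x p = y q ∧ x q = y p
    · rw [if_pos h1, if_pos ⟨h2.1, h2.2⟩, if_pos (key.mpr ⟨h1, h2⟩)]
    · rw [if_pos h1, if_neg (fun hh => h2 ⟨hh.1, hh.2⟩),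
        if_neg (fun hh => h2 (key.mp hh).2)]
  · rw [if_neg h1, if_neg (fun hh => h1 (key.mp hh).1)]

lemma triple_sum (N k : ℕ) (p q : Fin k → Fin (k+1)) (h : ∀ r, p r ≠ q r) :
    (∑ a : Fin N, ∑ b : Fin N, ∑ r : Fin k, emb2 (p r) (q r) (EE N a b b a))
      = ∑ r : Fin k, permMat N (Equiv.swap (p r) (q r)) := by
  have h1 : (∑ a : Fin N, ∑ b : Fin N, ∑ r : Fin k, emb2 (p r) (q r) (EE N a b b a))
      = ∑ r : Fin k, ∑ a : Fin N, ∑ b : Fin N, emb2 (p r) (q r) (EE N a b b a) := by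
    rw [show (∑ a : Fin N, ∑ b : Fin N, ∑ r : Fin k, emb2 (p r) (q r) (EE N a b b a))
        = ∑ a : Fin N, ∑ r : Fin k, ∑ b : Fin N, emb2 (p r) (q r) (EE N a b b a) from
      Finset.sum_congr rfl fun a _ => Finset.sum_comm]
    exact Finset.sum_comm
  rw [h1]
  refine Finset.sum_congr rfl fun r _ => ?_
  rw [← emb2_Pmat (p r) (q r) (h r), ← sum_EE N, emb2_sum]
  exact Finset.sum_congr rfl fun a _ => (emb2_sum _ _ _ _).symm

lemma swap_mul_AskFirst {N k : ℕ} (r s : Fin k) (hrs : r ≠ s) :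
    permMat N (Equiv.swap (Fin.castSucc r) (Fin.castSucc s)) * AskFirst N k
      = - AskFirst N k := by
  ext x y
  rw [permMat_mul_apply, Equiv.symm_swap]
  simp only [AskFirst, Matrix.of_apply, Matrix.neg_apply]
  have hlast : (x ∘ ⇑(Equiv.swap (Fin.castSucc r) (Fin.castSucc s))) (Fin.last k)
      = x (Fin.last k) := by
    simp only [Function.comp_apply]
    rw [Equiv.swap_apply_of_ne_of_ne (Fin.castSucc_lt_last r).ne'
      (Fin.castSucc_lt_last s).ne']
  have hfirst : (fun t => (x ∘ ⇑(Equiv.swap (Fin.castSucc r) (Fin.castSucc s)))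
        (Fin.castSucc t))
      = (fun t => x (Fin.castSucc t)) ∘ ⇑(Equiv.swap r s) := by
    funext t
    simp only [Function.comp_apply]
    congr 1
    rcases eq_or_ne t r with rfl | htr
    · simp
    rcases eq_or_ne t s with rfl | hts
    · simp
    · rw [Equiv.swap_apply_of_ne_of_ne (by simpa using htr) (by simpa using hts),
        Equiv.swap_apply_of_ne_of_ne htr hts]
  rw [hlast, hfirst, Ask_comp_swap r s hrs]
  ring

lemma conj_swap (k : ℕ) (r : Fin k) :
    ((finRotate (k+1)).trans (Equiv.swap 0 r.succ)).trans (finRotate (k+1)).symm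
      = Equiv.swap (Fin.castSucc r) (Fin.last k) := by
  rw [Equiv.trans_swap_trans_symm]
  have h1 : (finRotate (k+1)).symm 0 = Fin.last k := by
    rw [Equiv.symm_apply_eq, finRotate_last]
  have h2 : (finRotate (k+1)).symm r.succ = Fin.castSucc r := by
    rw [Equiv.symm_apply_eq, finRotate_succ_apply, Fin.coeSucc_eq_succ]
  rw [h1, h2, Equiv.swap_comm]

lemma swap_last_trans {k : ℕ} (r s : Fin k) (hrs : r ≠ s) :
    (Equiv.swap (Fin.castSucc r) (Fin.last k)).trans
        (Equiv.swap (Fin.castSucc s) (Fin.last k))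
      = (Equiv.swap (Fin.castSucc s) (Fin.last k)).trans
          (Equiv.swap (Fin.castSucc r) (Fin.castSucc s)) := by
  have h1 : Fin.castSucc r ≠ Fin.castSucc s := by simpa using hrs
  have hr : Fin.castSucc r ≠ Fin.last k := (Fin.castSucc_lt_last r).ne
  rw [← Equiv.Perm.mul_def, ← Equiv.Perm.mul_def,
    Equiv.mul_swap_eq_swap_mul, Equiv.swap_apply_of_ne_of_ne h1 hr,
    Equiv.swap_apply_right]


/-- Corollary 3.3: as operators on `V^{∧k} ⊗ V` (i.e. after composing with the
projector `A^{(k)} ⊗ id_V` on the right),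
`R_{∧k,∧1}(u) ∘ (σ ∘ R_{∧1,∧k}(−u) ∘ σ⁻¹) = (u+1)(k−u) · id`. -/
theorem statement4 (N k : ℕ) (hN : 1 ≤ N) (hk1 : 1 ≤ k) (hk : k ≤ N) (u : ℂ) :
    smallRk1 N k u * (flipMat N k * smallR1k N k (-u) * flipMatInv N k) * AskFirst N k
      = ((u + 1) * ((k : ℂ) - u)) • AskFirst N k := by
  have hT1 : smallRk1 N k u
      = u • 1 + ∑ r : Fin k, permMat N (Equiv.swap (Fin.castSucc r) (Fin.last k)) := by
    rw [show smallRk1 N k u = u • 1 + ∑ a : Fin N, ∑ b : Fin N, ∑ r : Fin k,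
        emb2 (Fin.castSucc r) (Fin.last k) (EE N a b b a) from rfl,
      triple_sum N k (fun r => Fin.castSucc r) (fun _ => Fin.last k)
        (fun r => (Fin.castSucc_lt_last r).ne)]
  have hT2 : smallR1k N k (-u)
      = (-u + (k : ℂ) - 1) • 1
        + ∑ r : Fin k, permMat N (Equiv.swap (0 : Fin (k+1)) r.succ) := by
    rw [show smallR1k N k (-u) = (-u + (k : ℂ) - 1) • 1 + ∑ a : Fin N, ∑ b : Fin N,
        ∑ r : Fin k, emb2 (0 : Fin (k+1)) r.succ (EE N a b b a) from rfl,
      triple_sum N k (fun _ => (0 : Fin (k+1))) (fun r => r.succ)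
        (fun r => (Fin.succ_ne_zero r).symm)]
  have hconj : flipMat N k * smallR1k N k (-u) * flipMatInv N k
      = (-u + (k : ℂ) - 1) • 1
        + ∑ r : Fin k, permMat N (Equiv.swap (Fin.castSucc r) (Fin.last k)) := by
    have hflip : flipMat N k = permMat N (finRotate (k+1)) := rfl
    have hflipinv : flipMatInv N k = permMat N (finRotate (k+1)).symm := rfl
    rw [hT2, hflip, hflipinv, mul_add, add_mul, Matrix.mul_smul, mul_one,
      Matrix.smul_mul, permMat_mul, Equiv.self_trans_symm, permMat_refl,
      Finset.mul_sum, Finset.sum_mul]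
    congr 1
    refine Finset.sum_congr rfl fun r _ => ?_
    rw [permMat_mul, permMat_mul, conj_swap]
  have fact1 : ∀ r : Fin k,
      permMat N (Equiv.swap (Fin.castSucc r) (Fin.last k)) *
        (permMat N (Equiv.swap (Fin.castSucc r) (Fin.last k)) * AskFirst N k)
      = AskFirst N k := by
    intro r
    rw [← Matrix.mul_assoc, permMat_mul, Equiv.swap_swap, permMat_refl, one_mul]
  have fact2 : ∀ r s : Fin k, r ≠ s →
      permMat N (Equiv.swap (Fin.castSucc r) (Fin.last k)) *
        (permMat N (Equiv.swap (Fin.castSucc s) (Fin.last k)) * AskFirst N k)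
      = -(permMat N (Equiv.swap (Fin.castSucc s) (Fin.last k)) * AskFirst N k) := by
    intro r s hrs
    rw [← Matrix.mul_assoc, permMat_mul, swap_last_trans r s hrs, ← permMat_mul,
      Matrix.mul_assoc, swap_mul_AskFirst r s hrs, Matrix.mul_neg]
  have hterm : ∀ r s : Fin k,
      permMat N (Equiv.swap (Fin.castSucc r) (Fin.last k)) *
        (permMat N (Equiv.swap (Fin.castSucc s) (Fin.last k)) * AskFirst N k)
      = (if s = r then AskFirst N k
            + permMat N (Equiv.swap (Fin.castSucc r) (Fin.last k)) * AskFirst N k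
          else 0)
        - permMat N (Equiv.swap (Fin.castSucc s) (Fin.last k)) * AskFirst N k := by
    intro r s
    rcases eq_or_ne s r with rfl | hsr
    · rw [if_pos rfl, fact1 s]
      abel
    · rw [if_neg hsr, fact2 r s (Ne.symm hsr), zero_sub]
  have hTTA : (∑ r : Fin k, permMat N (Equiv.swap (Fin.castSucc r) (Fin.last k))) *
        ((∑ r : Fin k, permMat N (Equiv.swap (Fin.castSucc r) (Fin.last k))) * AskFirst N k)
      = (k : ℂ) • AskFirst N k
        + (∑ r : Fin k, permMat N (Equiv.swap (Fin.castSucc r) (Fin.last k))) * AskFirst N k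
        - (k : ℂ) • ((∑ r : Fin k,
            permMat N (Equiv.swap (Fin.castSucc r) (Fin.last k))) * AskFirst N k) := by
    rw [Finset.sum_mul]
    have inner : ∀ r : Fin k,
        permMat N (Equiv.swap (Fin.castSucc r) (Fin.last k)) *
          ((∑ s : Fin k, permMat N (Equiv.swap (Fin.castSucc s) (Fin.last k))) * AskFirst N k)
        = AskFirst N k
          + permMat N (Equiv.swap (Fin.castSucc r) (Fin.last k)) * AskFirst N k
          - (∑ s : Fin k,
              permMat N (Equiv.swap (Fin.castSucc s) (Fin.last k))) * AskFirst N k := by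
      intro r
      rw [Finset.sum_mul, Finset.mul_sum,
        Finset.sum_congr rfl fun s _ => hterm r s, Finset.sum_sub_distrib,
        Fintype.sum_ite_eq' r, ← Finset.sum_mul]
    rw [Finset.sum_congr rfl fun r _ => inner r, Finset.sum_sub_distrib,
      Finset.sum_add_distrib, Finset.sum_const, Finset.sum_const, Finset.card_univ,
      Fintype.card_fin, ← Nat.cast_smul_eq_nsmul ℂ k (AskFirst N k),
      ← Nat.cast_smul_eq_nsmul ℂ k, ← Finset.sum_mul]
  rw [hconj, hT1]
  have e1 : (u • (1 : Matrix (Fin (k+1) → Fin N) (Fin (k+1) → Fin N) ℂ)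
        + ∑ r : Fin k, permMat N (Equiv.swap (Fin.castSucc r) (Fin.last k)))
      * ((-u + (k : ℂ) - 1) • 1
        + ∑ r : Fin k, permMat N (Equiv.swap (Fin.castSucc r) (Fin.last k)))
      * AskFirst N k
      = (u * (-u + (k : ℂ) - 1)) • AskFirst N k
        + (u + (-u + (k : ℂ) - 1)) •
            ((∑ r : Fin k, permMat N (Equiv.swap (Fin.castSucc r) (Fin.last k)))
              * AskFirst N k)
        + (∑ r : Fin k, permMat N (Equiv.swap (Fin.castSucc r) (Fin.last k))) *
            ((∑ r : Fin k, permMat N (Equiv.swap (Fin.castSucc r) (Fin.last k)))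
              * AskFirst N k) := by
    simp only [add_mul, mul_add, Matrix.smul_mul, Matrix.mul_smul, one_mul, mul_one,
      Matrix.mul_assoc]
    module
  rw [e1, hTTA]
  module

end BetheStatements
end
end
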